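/- Let V be a graded Lie algebra of degree n over a commutative ring R with 2 invertible, and let D be a differential of odd degree k on V. Then D is a morphism from the derived bracket to the original bracket: for all homogeneous a,b ∈ V, D([a,b]_{(D)}) = [Da, Db]. -/

import Mathlib

/-- `(-1)^m` as an integer, for `m : ℤ` (depends only on the parity of `m`). -/
def gsign (m : ℤ) : ℤ := (((-1 : ℤˣ) ^ m : ℤˣ) : ℤ)

/-- A graded Lie algebra of degree `n` over a commutative ring `R`: a `ℤ`-graded
`R`-module with an `R`-bilinear bracket sending `V_i × V_j` into `V_{i+j+n}`,
graded skew-symmetric and satisfying the graded Jacobi identity. -/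
structure GradedLieAlgebraDeg (R : Type*) [CommRing R] (V : Type*) [AddCommGroup V] [Module R V]
    (n : ℤ) where
  grade : ℤ → Submodule R V
  bracket : V →ₗ[R] V →ₗ[R] V
  bracket_mem : ∀ i j : ℤ, ∀ a ∈ grade i, ∀ b ∈ grade j, bracket a b ∈ grade (i + j + n)
  skew : ∀ i j : ℤ, ∀ a ∈ grade i, ∀ b ∈ grade j,
    bracket a b = - (gsign ((n + i) * (n + j)) • bracket b a)
  jacobi : ∀ i j l : ℤ, ∀ a ∈ grade i, ∀ b ∈ grade j, ∀ c ∈ grade l,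
    bracket a (bracket b c)
      = bracket (bracket a b) c + gsign ((n + i) * (n + j)) • bracket b (bracket a c)

/-- `D` is a differential of odd degree `k` on the graded Lie algebra `L`:
homogeneous of odd degree `k`, of square zero, and a graded derivation of the bracket. -/
structure GradedLieAlgebraDeg.IsDifferential {R : Type*} [CommRing R] {V : Type*} [AddCommGroup V]
    [Module R V] {n : ℤ} (L : GradedLieAlgebraDeg R V n) (D : V →ₗ[R] V) (k : ℤ) : Prop where
  odd : Odd k
  map_mem : ∀ i : ℤ, ∀ a ∈ L.grade i, D a ∈ L.grade (i + k)
  sq_zero : ∀ a : V, D (D a) = 0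
  leibniz : ∀ i j : ℤ, ∀ a ∈ L.grade i, ∀ b ∈ L.grade j,
    D (L.bracket a b) = L.bracket (D a) b + gsign (k * (n + i)) • L.bracket a (D b)

/-- The derived bracket `[a,b]_{(D)} = (-1)^{n+|a|+1} • [D a, b]`, for `a` homogeneous
of degree `i`. -/
def GradedLieAlgebraDeg.der {R : Type*} [CommRing R] {V : Type*} [AddCommGroup V] [Module R V]
    {n : ℤ} (L : GradedLieAlgebraDeg R V n) (D : V →ₗ[R] V) (i : ℤ) (a b : V) : V :=
  gsign (n + i + 1) • L.bracket (D a) b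

/-- The derived bracket `[a,b]_d = [[a,d],b]` by an element `d`. -/
def GradedLieAlgebraDeg.derEl {R : Type*} [CommRing R] {V : Type*} [AddCommGroup V] [Module R V]
    {n : ℤ} (L : GradedLieAlgebraDeg R V n) (d : V) (a b : V) : V :=
  L.bracket (L.bracket a d) b


lemma gsign_add (a b : ℤ) : gsign (a + b) = gsign a * gsign b := by
  simp [gsign, zpow_add]

lemma gsign_sq (a : ℤ) : gsign a * gsign a = 1 := by
  rcases Int.units_eq_one_or ((-1 : ℤˣ) ^ a) with h | h <;> simp [gsign, h]

lemma gsign_eq_negOnePow (m : ℤ) : gsign m = (Int.negOnePow m : ℤ) := rfl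

lemma gsign_odd_mul {k : ℤ} (hk : Odd k) (m : ℤ) : gsign (k * m) = gsign m := by
  obtain ⟨t, rfl⟩ := hk
  simp only [gsign_eq_negOnePow]
  congr 1
  rw [show (2 * t + 1) * m = 2 * (t * m) + m by ring, Int.negOnePow_add,
    Int.negOnePow_even _ ⟨t * m, by ring⟩, one_mul]

lemma gsign_even_add {e : ℤ} (he : Even e) (a : ℤ) : gsign (e + a) = gsign a := by
  obtain ⟨r, rfl⟩ := he
  rw [gsign_add, gsign_add, gsign_sq, one_mul]

/-- `D` is a morphism from the derived bracket to the original bracket: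
`D [a,b]_{(D)} = [D a, D b]` for homogeneous `a, b`. -/
theorem differential_is_morphism_of_derived_bracket {R : Type*} [CommRing R]
    [Invertible (2 : R)] {V : Type*} [AddCommGroup V] [Module R V] {n k : ℤ}
    (L : GradedLieAlgebraDeg R V n) (D : V →ₗ[R] V) (hD : L.IsDifferential D k) :
    ∀ i j : ℤ, ∀ a ∈ L.grade i, ∀ b ∈ L.grade j,
      D (L.der D i a b) = L.bracket (D a) (D b) := by
  intro i j a ha b hb
  have hDa := hD.map_mem i a ha
  rw [GradedLieAlgebraDeg.der, map_zsmul, hD.leibniz (i + k) j (D a) hDa b hb, hD.sq_zero,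
    map_zero, LinearMap.zero_apply, zero_add, smul_smul, gsign_odd_mul hD.odd]
  obtain ⟨t, rfl⟩ := hD.odd
  have : n + (i + (2 * t + 1)) = (t + t) + (n + i + 1) := by ring
  rw [this, gsign_even_add ⟨t, rfl⟩, gsign_sq, one_smul]
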